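/- Let γ = x_1 + i·x_2 in the complexified free algebra on two symmetric variables x_1, x_2. Then for every d ≥ 1: D[Re(γ^d), x_1, h] = D[Im(γ^d), x_2, h] and D[Re(γ^d), x_2, h] = -D[Im(γ^d), x_1, h]. -/

import Mathlib

noncomputable section

/-- Variables: `some i` is `xᵢ`, `none` is the direction variable `h`. -/
abbrev Var (g : ℕ) := Option (Fin g)

/-- Noncommutative polynomials `ℝ⟨x₁,…,x_g,h⟩`. -/
abbrev NC (g : ℕ) := MonoidAlgebra ℝ (FreeMonoid (Var g))

/-- The monomial corresponding to a word. -/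
def mono (g : ℕ) (w : List (Var g)) : NC g :=
  MonoidAlgebra.of ℝ (FreeMonoid (Var g)) (FreeMonoid.ofList w)

/-- The generator `xᵢ`. -/
def Xv (g : ℕ) (i : Fin g) : NC g := mono g [some i]

/-- The direction variable `h`. -/
def Hv (g : ℕ) : NC g := mono g [none]

/-- Directional derivative of a word in `xᵢ` in direction `h`: sum of the
terms obtained by replacing one occurrence of `xᵢ` by `h`. -/
def wordD (g : ℕ) (i : Fin g) : List (Var g) → NC g
  | [] => 0
  | a :: w =>
      (if a = some i then mono g (none :: w) else 0) + mono g [a] * wordD g i w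

/-- Directional derivative `D[p, xᵢ, h]`, extended linearly from words. -/
def D (g : ℕ) (i : Fin g) (p : NC g) : NC g :=
  Finsupp.sum p.coeff fun w c => c • wordD g i (FreeMonoid.toList w)

/-- The noncommutative Laplacian `Lap[p,h] := ∑ᵢ D[D[p,xᵢ,h],xᵢ,h]`. -/
def Lap (g : ℕ) (p : NC g) : NC g := ∑ i : Fin g, D g i (D g i p)

/-- The transpose: linear anti-automorphism reversing words and fixing generators. -/
def transp (g : ℕ) (p : NC g) : NC g :=
  MonoidAlgebra.ofCoeff (Finsupp.mapDomain (fun w => FreeMonoid.ofList (FreeMonoid.toList w).reverse) p.coeff)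

/-- Evaluation of a polynomial at a tuple of matrices (one for each variable). -/
def eval (g n : ℕ) (M : Var g → Matrix (Fin n) (Fin n) ℝ) (p : NC g) :
    Matrix (Fin n) (Fin n) ℝ :=
  Finsupp.sum p.coeff fun w c => c • ((FreeMonoid.toList w).map M).prod

/-- `p` is a polynomial in `x₁,…,x_g` only (the variable `h` does not occur). -/
def NoH (g : ℕ) (p : NC g) : Prop :=
  ∀ w ∈ p.coeff.support, none ∉ FreeMonoid.toList w

/-- `p` is a homogeneous polynomial of degree `d` in the variables `x₁,…,x_g`. -/
def HomogX (g : ℕ) (d : ℕ) (p : NC g) : Prop :=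
  ∀ w ∈ p.coeff.support, none ∉ FreeMonoid.toList w ∧ (FreeMonoid.toList w).length = d


/-- Complex noncommutative polynomials `ℂ⟨x₁,x₂,h⟩`. -/
abbrev NCC := MonoidAlgebra ℂ (FreeMonoid (Var 2))

def XC (i : Fin 2) : NCC := MonoidAlgebra.of ℂ (FreeMonoid (Var 2)) (FreeMonoid.ofList [some i])

/-- `γ = x₁ + i x₂`. -/
def gam : NCC := XC 0 + Complex.I • XC 1

/-- Coefficientwise real part. -/
def rePart (p : NCC) : NC 2 := MonoidAlgebra.ofCoeff (Finsupp.mapRange Complex.re Complex.zero_re p.coeff)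

/-- Coefficientwise imaginary part. -/
def imPart (p : NCC) : NC 2 := MonoidAlgebra.ofCoeff (Finsupp.mapRange Complex.im Complex.zero_im p.coeff)

/-- Complex-linear transpose, reversing monomials. -/
def transpC (p : NCC) : NCC :=
  MonoidAlgebra.ofCoeff (Finsupp.mapDomain (fun w => FreeMonoid.ofList (FreeMonoid.toList w).reverse) p.coeff)

/-! Writing `γ ^ d = R + i J`, the identities hold for `d = 0` and survive the step
`γ ^ (d + 1) = γ * γ ^ d`: by `γ * (R + i J) = (x₁ R - x₂ J) + i (x₂ R + x₁ J)` and the Leibniz rule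
`D[xⱼ q, xᵢ, h] = δᵢⱼ h q + xⱼ D[q, xᵢ, h]`, the new derivatives are combinations of the old ones. -/

open MonoidAlgebra

section Derivative

variable {g : ℕ} (i : Fin g)

lemma D_add (p q : NC g) : D g i (p + q) = D g i p + D g i q :=
  Finsupp.sum_add_index' (fun _ => zero_smul _ _) fun _ _ _ => add_smul _ _ _

lemma D_sub (p q : NC g) : D g i (p - q) = D g i p - D g i q :=
  map_sub (AddMonoidHom.mk' (D g i) (D_add i)) p q

lemma D_single (w : FreeMonoid (Var g)) (c : ℝ) :
    D g i (single w c) = c • wordD g i (FreeMonoid.toList w) :=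
  Finsupp.sum_single_index (zero_smul _ _)

lemma D_zero : D g i 0 = 0 :=
  Finsupp.sum_zero_index

lemma D_one : D g i 1 = 0 := by
  rw [one_def, D_single]
  exact smul_zero _

lemma D_Xv_mul (j : Fin g) (q : NC g) :
    D g i (Xv g j * q) = (if j = i then Hv g * q else 0) + Xv g j * D g i q := by
  induction q using MonoidAlgebra.induction_linear with
  | zero => simp only [mul_zero, D_zero, ite_self, add_zero]
  | add p q hp hq => rw [mul_add, D_add, hp, hq, D_add, mul_add, mul_add]; split_ifs <;> abel
  | single w c =>
    have hcons : FreeMonoid.toList (FreeMonoid.ofList [some j] * w) = some j :: w.toList := rfl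
    simp only [Xv, Hv, mono, of_apply, single_mul_single, one_mul, D_single, hcons, wordD,
      Option.some_inj, smul_add, mul_smul_comm]
    split_ifs
    · rw [smul_single', mul_one]
      rfl
    · rw [smul_zero]

lemma D_Xv_self_mul (q : NC g) : D g i (Xv g i * q) = Hv g * q + Xv g i * D g i q := by
  rw [D_Xv_mul, if_pos rfl]

lemma D_Xv_mul_of_ne {j : Fin g} (hji : j ≠ i) (q : NC g) :
    D g i (Xv g j * q) = Xv g j * D g i q := by
  rw [D_Xv_mul, if_neg hji, zero_add]

end Derivative

section RealImaginaryParts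

lemma ofCoeff_mapRange_single_one_mul {R S M : Type*} [Semiring R] [Semiring S] [Monoid M]
    (f : R →+ S) (m : M) (q : MonoidAlgebra R M) :
    ofCoeff (Finsupp.mapRange f f.map_zero (single m 1 * q).coeff)
      = single m 1 * ofCoeff (Finsupp.mapRange f f.map_zero q.coeff) := by
  induction q using MonoidAlgebra.induction_linear with
  | zero => simp
  | add p q hp hq =>
    rw [mul_add, coeff_add, Finsupp.mapRange_add f.map_add, ofCoeff_add, hp, hq, coeff_add,
      Finsupp.mapRange_add f.map_add, ofCoeff_add, mul_add]
  | single w c =>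
    rw [single_mul_single, one_mul, coeff_single, coeff_single, Finsupp.mapRange_single,
      Finsupp.mapRange_single, ofCoeff_single, ofCoeff_single, single_mul_single, one_mul]

lemma rePart_add (p q : NCC) : rePart (p + q) = rePart p + rePart q :=
  congrArg ofCoeff (Finsupp.mapRange_add Complex.add_re _ _)

lemma imPart_add (p q : NCC) : imPart (p + q) = imPart p + imPart q :=
  congrArg ofCoeff (Finsupp.mapRange_add Complex.add_im _ _)

lemma rePart_one : rePart 1 = 1 := by
  rw [rePart, one_def, coeff_single, Finsupp.mapRange_single, Complex.one_re, ofCoeff_single]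
  rfl

lemma imPart_one : imPart 1 = 0 := by
  rw [imPart, one_def, coeff_single, Finsupp.mapRange_single, Complex.one_im,
    Finsupp.single_zero]
  rfl

lemma rePart_I_smul (q : NCC) : rePart (Complex.I • q) = -imPart q := by
  ext w
  simp [rePart, imPart]

lemma imPart_I_smul (q : NCC) : imPart (Complex.I • q) = rePart q := by
  ext w
  simp [rePart, imPart]

lemma rePart_XC_mul (j : Fin 2) (q : NCC) : rePart (XC j * q) = Xv 2 j * rePart q :=
  ofCoeff_mapRange_single_one_mul Complex.reAddGroupHom _ q

lemma imPart_XC_mul (j : Fin 2) (q : NCC) : imPart (XC j * q) = Xv 2 j * imPart q :=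
  ofCoeff_mapRange_single_one_mul Complex.imAddGroupHom _ q

lemma rePart_gam_mul (q : NCC) :
    rePart (gam * q) = Xv 2 0 * rePart q - Xv 2 1 * imPart q := by
  rw [gam, add_mul, smul_mul_assoc, rePart_add, rePart_I_smul, rePart_XC_mul, imPart_XC_mul,
    sub_eq_add_neg]

lemma imPart_gam_mul (q : NCC) :
    imPart (gam * q) = Xv 2 1 * rePart q + Xv 2 0 * imPart q := by
  rw [gam, add_mul, smul_mul_assoc, imPart_add, imPart_I_smul, imPart_XC_mul, rePart_XC_mul,
    add_comm]

end RealImaginaryParts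

def IsCauchyRiemann (p : NCC) : Prop :=
  D 2 0 (rePart p) = D 2 1 (imPart p) ∧ D 2 1 (rePart p) = -D 2 0 (imPart p)

lemma isCauchyRiemann_one : IsCauchyRiemann 1 := by
  simp only [IsCauchyRiemann, rePart_one, imPart_one, D_one, D_zero, neg_zero, and_self]

lemma IsCauchyRiemann.gam_mul {p : NCC} (hp : IsCauchyRiemann p) :
    IsCauchyRiemann (gam * p) := by
  have h01 : (0 : Fin 2) ≠ 1 := by decide
  obtain ⟨hre, him⟩ := hp
  simp only [IsCauchyRiemann, rePart_gam_mul, imPart_gam_mul, D_add, D_sub, D_Xv_self_mul,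
    D_Xv_mul_of_ne _ h01, D_Xv_mul_of_ne _ h01.symm, hre, him]
  constructor <;> noncomm_ring

theorem dird_gamma_pow_general (d : ℕ) :
    D 2 0 (rePart (gam ^ d)) = D 2 1 (imPart (gam ^ d)) ∧
    D 2 1 (rePart (gam ^ d)) = - D 2 0 (imPart (gam ^ d)) := by
  induction d with
  | zero => exact isCauchyRiemann_one
  | succ d ih => exact pow_succ' gam d ▸ IsCauchyRiemann.gam_mul ih

/-- Cauchy–Riemann type identities for derivatives of `γ^d`. -/
theorem dird_gamma_pow (d : ℕ) (hd : 1 ≤ d) :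
    D 2 0 (rePart (gam ^ d)) = D 2 1 (imPart (gam ^ d)) ∧
    D 2 1 (rePart (gam ^ d)) = - D 2 0 (imPart (gam ^ d)) :=
  dird_gamma_pow_general d
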